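/- arXiv:1312.5554 — 6 statements merged into one kernel-verified Lean document; each statement's English description precedes it below -/
import Mathlib

section
/- Let $k \geq 2$, let $\omega$ be a primitive complex $k$-th root of unity, and let $s$ be an integer. Then $\frac{1}{k} \sum_{i=1}^{k-1} \frac{\omega^{i s}}{1 - \omega^{-i}} = \lfloor s/k \rfloor - \frac{s}{k} + \frac{k-1}{2k}$. -/
/-!
Write `F(s)` for the sum. Its terms depend only on `s mod k`, and multiplying the numerator of
the `i`-th term by `ωⁱ` adds `ω^{i(s+1)}` to it, so `F(s+1) = F(s) - 1` as long as `k ∤ s+1`.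
Pairing `i` with `k - i` and using `1/(1 - x⁻¹) + 1/(1 - x) = 1` gives `2F(0) = k - 1`, hence
`2F(r) = k - 1 - 2r` for `0 ≤ r < k`, which is the identity for `r = s mod k`.
-/

open Finset

section GeneralField

variable {K : Type*} [Field K]

theorem sum_Icc_one_pow_eq_neg_one {x : K} {k : ℕ} (hk : k ≠ 0) (hxk : x ^ k = 1) (hx : x ≠ 1) :
    ∑ i ∈ Icc 1 (k - 1), x ^ i = -1 := by
  have hrange : range k = insert 0 (Icc 1 (k - 1)) := by
    ext j; simp only [mem_range, mem_insert, mem_Icc]; omega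
  have hgeom := geom_sum_eq hx k
  rw [hxk, sub_self, zero_div, hrange, sum_insert (by simp), pow_zero] at hgeom
  linear_combination hgeom

theorem one_div_one_sub_inv_add_one_div_one_sub {x : K} (hx0 : x ≠ 0) (hx1 : x ≠ 1) :
    1 / (1 - x⁻¹) + 1 / (1 - x) = 1 := by
  have : x - 1 ≠ 0 := sub_ne_zero.mpr hx1
  field_simp
  ring

theorem mul_div_one_sub_inv {x : K} (y : K) (hx0 : x ≠ 0) (hx1 : x ≠ 1) :
    y * x / (1 - x⁻¹) = y / (1 - x⁻¹) + y * x := by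
  have : x - 1 ≠ 0 := sub_ne_zero.mpr hx1
  field_simp
  ring

end GeneralField

def bryanSum {K : Type*} [Field K] (ω : K) (k : ℕ) (s : ℤ) : K :=
  ∑ i ∈ Icc 1 (k - 1), ω ^ ((i : ℤ) * s) / (1 - ω ^ (-(i : ℤ)))

namespace IsPrimitiveRoot

variable {K : Type*} [Field K] {ω : K} {k : ℕ}

theorem pow_ne_one_of_mem_Icc (hω : IsPrimitiveRoot ω k) {i : ℕ} (hi : i ∈ Icc 1 (k - 1)) :
    ω ^ i ≠ 1 := by
  rw [mem_Icc] at hi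
  exact hω.pow_ne_one_of_pos_of_lt (by omega) (by omega)

theorem ne_zero_of_mem_Icc (hω : IsPrimitiveRoot ω k) {i : ℕ} (hi : i ∈ Icc 1 (k - 1)) : ω ≠ 0 :=
  hω.ne_zero (by rw [mem_Icc] at hi; omega)

theorem sum_Icc_zpow_mul_eq_neg_one (hω : IsPrimitiveRoot ω k) (hk : k ≠ 0) {m : ℤ}
    (hm : ¬(k : ℤ) ∣ m) :
    ∑ i ∈ Icc 1 (k - 1), ω ^ ((i : ℤ) * m) = -1 := by
  have hxk : (ω ^ m) ^ k = 1 := by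
    rw [← zpow_natCast, ← zpow_mul, mul_comm, zpow_mul, zpow_natCast, hω.pow_eq_one, one_zpow]
  have hx : ω ^ m ≠ 1 := by rwa [Ne, hω.zpow_eq_one_iff_dvd]
  simp_rw [mul_comm _ m, zpow_mul, zpow_natCast]
  exact sum_Icc_one_pow_eq_neg_one hk hxk hx

theorem bryanSum_emod (hω : IsPrimitiveRoot ω k) (s : ℤ) :
    bryanSum ω k (s % k) = bryanSum ω k s := by
  refine sum_congr rfl fun i hi => ?_
  have hsplit : (i : ℤ) * s = i * (s % k) + k * (i * (s / k)) := by
    linear_combination (i : ℤ) * (Int.mul_ediv_add_emod s k).symm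
  rw [hsplit, zpow_add₀ (hω.ne_zero_of_mem_Icc hi), zpow_mul ω k, hω.zpow_eq_one, one_zpow, mul_one]

theorem bryanSum_add_one (hω : IsPrimitiveRoot ω k) (s : ℤ) :
    bryanSum ω k (s + 1) = bryanSum ω k s + ∑ i ∈ Icc 1 (k - 1), ω ^ ((i : ℤ) * (s + 1)) := by
  rw [bryanSum, bryanSum, ← sum_add_distrib]
  refine sum_congr rfl fun i hi => ?_
  have hω0 := hω.ne_zero_of_mem_Icc hi
  rw [mul_add_one, zpow_add₀ hω0, zpow_neg, zpow_natCast]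
  exact mul_div_one_sub_inv _ (pow_ne_zero _ hω0) (hω.pow_ne_one_of_mem_Icc hi)

theorem two_mul_bryanSum_zero (hω : IsPrimitiveRoot ω k) (hk : k ≠ 0) :
    2 * bryanSum ω k 0 = k - 1 := by
  have hreflect : ∑ i ∈ Icc 1 (k - 1), 1 / (1 - (ω ^ i)⁻¹) =
      ∑ i ∈ Icc 1 (k - 1), 1 / (1 - ω ^ i) := by
    refine sum_nbij' (k - ·) (k - ·) ?_ ?_ ?_ ?_ fun i hi => ?_
    all_goals try (intro i hi; simp only [mem_Icc] at hi ⊢; omega)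
    rw [mem_Icc] at hi
    rw [eq_inv_of_mul_eq_one_left (a := ω ^ (k - i)) (by
      rw [← pow_add, Nat.sub_add_cancel (by omega), hω.pow_eq_one])]
  have hpair : ∀ i ∈ Icc 1 (k - 1), 1 / (1 - (ω ^ i)⁻¹) + 1 / (1 - ω ^ i) = 1 := fun i hi =>
    one_div_one_sub_inv_add_one_div_one_sub (pow_ne_zero _ (hω.ne_zero_of_mem_Icc hi))
      (hω.pow_ne_one_of_mem_Icc hi)
  calc 2 * bryanSum ω k 0 = ∑ i ∈ Icc 1 (k - 1), (1 / (1 - (ω ^ i)⁻¹) + 1 / (1 - ω ^ i)) := by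
        simp only [sum_add_distrib, ← hreflect, two_mul, bryanSum, mul_zero, zpow_zero, zpow_neg,
          zpow_natCast]
    _ = k - 1 := by
        rw [sum_congr rfl hpair, sum_const, Nat.card_Icc, nsmul_one, Nat.add_sub_cancel,
          Nat.cast_pred (by omega)]

theorem two_mul_bryanSum_natCast (hω : IsPrimitiveRoot ω k) {r : ℕ} (hr : r < k) :
    2 * bryanSum ω k r = k - 1 - 2 * r := by
  induction r with
  | zero => simpa using hω.two_mul_bryanSum_zero (by omega)
  | succ r ih =>
    have hndvd : ¬(k : ℤ) ∣ r + 1 := by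
      exact_mod_cast Nat.not_dvd_of_pos_of_lt r.succ_pos hr
    rw [Nat.cast_succ, hω.bryanSum_add_one, hω.sum_Icc_zpow_mul_eq_neg_one (by omega) hndvd,
      mul_add, ih (by omega)]
    push_cast
    ring

end IsPrimitiveRoot

/-- Bryan's identity:
`(1/k) ∑_{i=1}^{k-1} ω^{is}/(1-ω^{-i}) = ⌊s/k⌋ - s/k + (k-1)/(2k)`. -/
theorem bryan_identity (k : ℕ) (hk : 2 ≤ k) (ω : ℂ)
    (hω : IsPrimitiveRoot ω k) (s : ℤ) :
    (1 / (k : ℂ)) * ∑ i ∈ Finset.Icc 1 (k-1), ω ^ ((i : ℤ) * s) / (1 - ω ^ (-(i : ℤ)))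
      = (((⌊(s : ℚ) / (k : ℚ)⌋ : ℚ) - (s : ℚ) / (k : ℚ) + ((k : ℚ) - 1) / (2 * k) : ℚ) : ℂ) := by
  obtain ⟨r, hr⟩ : ∃ r : ℕ, (r : ℤ) = s % k :=
    ⟨_, Int.toNat_of_nonneg (Int.emod_nonneg s (by omega))⟩
  have hrk : r < k := by
    have := Int.emod_lt_of_pos s (by omega : (0 : ℤ) < k)
    omega
  have hsum : 2 * bryanSum ω k s = k - 1 - 2 * r := by
    rw [← hω.bryanSum_emod, ← hr]
    exact_mod_cast hω.two_mul_bryanSum_natCast hrk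
  have hs : (s : ℂ) = k * (s / k : ℤ) + r := by
    exact_mod_cast hr ▸ (Int.mul_ediv_add_emod s k).symm
  have hk0 : (k : ℂ) ≠ 0 := by exact_mod_cast (by omega : k ≠ 0)
  change 1 / (k : ℂ) * bryanSum ω k s = _
  rw [Rat.floor_intCast_div_natCast]
  push_cast
  rw [hs]
  field_simp
  linear_combination hsum
end

section
/- Let $k \geq 2$, let $\omega$ be a primitive complex $k$-th root of unity, and let $s$ be an integer. Then $\sum_{i=1}^{k-1} \frac{\omega^{s i}}{(1-\omega^{-i})^2} = \sum_{l=0}^{k-1} (s - l)\left( -\left\{ \frac{s-l}{k} \right\} + \frac{k-1}{2k} \right)$, where $\{x\} = x - \lfloor x \rfloor$ denotes the fractional part. -/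
/-!
The sawtooth `t ↦ (k - 1)/2 - (t mod k)` has the discrete Fourier expansion
`∑_{i=1}^{k-1} ω^{ti} / (1 - ω^{-i})`: this follows from `∑_{j<k} j x^j = k / (x - 1)` for a
`k`-th root of unity `x ≠ 1`, together with orthogonality of the characters `i ↦ ω^{mi}`.
Substituting the expansion into the right-hand side and exchanging the sums, the same identity at
`x = ω^{-i}` evaluates the inner sum `∑_{l<k} (s - l) ω^{(s-l)i} = k ω^{si} / (1 - ω^{-i})`,
which supplies the second factor `1 / (1 - ω^{-i})`.
-/

open Finset

section RootOfUnity

variable {K : Type*} [Field K] {x z : K} {k : ℕ}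

theorem sub_one_mul_sum_range_natCast_mul_pow {R : Type*} [CommRing R] (x : R) (n : ℕ) :
    (x - 1) * ∑ j ∈ range n, (j : R) * x ^ j = n * x ^ n - x * ∑ j ∈ range n, x ^ j := by
  induction n with
  | zero => simp
  | succ n ih =>
    simp only [sum_range_succ, mul_add, ih]
    push_cast
    ring

theorem geom_sum_eq_zero_of_pow_eq_one (hx : x ^ k = 1) (hx1 : x ≠ 1) :
    ∑ j ∈ range k, x ^ j = 0 := by
  rw [geom_sum_eq hx1, hx, sub_self, zero_div]

theorem sum_range_natCast_mul_pow_of_pow_eq_one (hx : x ^ k = 1) (hx1 : x ≠ 1) :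
    ∑ j ∈ range k, (j : K) * x ^ j = k / (x - 1) := by
  have h := sub_one_mul_sum_range_natCast_mul_pow x k
  rw [hx, geom_sum_eq_zero_of_pow_eq_one hx hx1, mul_one, mul_zero, sub_zero] at h
  rw [← h, mul_div_cancel_left₀ _ (sub_ne_zero.mpr hx1)]

theorem zpow_sub_natCast_eq_mul_inv_pow (hz : z ≠ 0) (t : ℤ) (j : ℕ) :
    z ^ (t - j) = z ^ t * z⁻¹ ^ j := by
  rw [zpow_sub₀ hz, zpow_natCast, inv_pow, div_eq_mul_inv]

theorem sum_range_natCast_mul_zpow_sub_of_pow_eq_one (hz : z ^ k = 1) (hz1 : z ≠ 1)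
    (hk : k ≠ 0) (t : ℤ) :
    ∑ j ∈ range k, (j : K) * z ^ (t - j) = k * z ^ t / (z⁻¹ - 1) := by
  have hinv : z⁻¹ ^ k = 1 := by rw [inv_pow, hz, inv_one]
  simp only [zpow_sub_natCast_eq_mul_inv_pow (IsUnit.of_pow_eq_one hz hk).ne_zero,
    mul_left_comm _ (z ^ t), ← mul_sum,
    sum_range_natCast_mul_pow_of_pow_eq_one hinv (inv_ne_one.mpr hz1)]
  ring

theorem sum_range_intCast_sub_mul_zpow_sub_of_pow_eq_one (hz : z ^ k = 1) (hz1 : z ≠ 1)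
    (hk : k ≠ 0) (s : ℤ) :
    ∑ l ∈ range k, ((s : K) - l) * z ^ (s - l) = k * z ^ s / (1 - z⁻¹) := by
  have hinv : z⁻¹ ^ k = 1 := by rw [inv_pow, hz, inv_one]
  have hgeom : ∑ l ∈ range k, z ^ (s - l) = 0 := by
    simp only [zpow_sub_natCast_eq_mul_inv_pow (IsUnit.of_pow_eq_one hz hk).ne_zero, ← mul_sum,
      geom_sum_eq_zero_of_pow_eq_one hinv (inv_ne_one.mpr hz1), mul_zero]
  simp only [sub_mul, sum_sub_distrib, ← mul_sum, hgeom, mul_zero, zero_sub,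
    sum_range_natCast_mul_zpow_sub_of_pow_eq_one hz hz1 hk]
  rw [← neg_sub 1 z⁻¹, div_neg, neg_neg]

theorem zpow_div_one_sub_inv_eq_sum (hz : z ^ k = 1) (hz1 : z ≠ 1) (hk : (k : K) ≠ 0) (t : ℤ) :
    z ^ t / (1 - z⁻¹) = -(k : K)⁻¹ * ∑ j ∈ range k, (j : K) * z ^ (t - j) := by
  have h1z : 1 - z⁻¹ ≠ 0 := sub_ne_zero.mpr (inv_ne_one.mpr hz1).symm
  rw [sum_range_natCast_mul_zpow_sub_of_pow_eq_one hz hz1 (by rintro rfl; exact hk Nat.cast_zero),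
    ← neg_sub 1 z⁻¹]
  field_simp

theorem zpow_div_one_sub_inv_sq_eq_sum (hz : z ^ k = 1) (hz1 : z ≠ 1) (hk : (k : K) ≠ 0)
    (s : ℤ) :
    z ^ s / (1 - z⁻¹) ^ 2 = ∑ l ∈ range k, ((s : K) - l) / k * (z ^ (s - l) / (1 - z⁻¹)) := by
  have h1z : 1 - z⁻¹ ≠ 0 := sub_ne_zero.mpr (inv_ne_one.mpr hz1).symm
  simp only [div_mul_div_comm, ← sum_div, sum_range_intCast_sub_mul_zpow_sub_of_pow_eq_one hz hz1
    (by rintro rfl; exact hk Nat.cast_zero) s]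
  field_simp

end RootOfUnity

theorem sum_range_natCast_mul_two {R : Type*} [CommRing R] (n : ℕ) :
    (∑ j ∈ range n, (j : R)) * 2 = n * (n - 1) := by
  induction n with
  | zero => simp
  | succ n ih => rw [sum_range_succ, add_mul, ih]; push_cast; ring

theorem sum_range_ite_dvd_intCast_sub {M : Type*} [AddCommMonoid M] {k : ℕ} (hk : 0 < k) (t : ℤ)
    (f : ℕ → M) : ∑ j ∈ range k, (if (k : ℤ) ∣ t - j then f j else 0) = f (t % k).toNat := by
  have hk' : (0 : ℤ) < k := by exact_mod_cast hk
  have hmod_nonneg := Int.emod_nonneg t hk'.ne'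
  have hmod_lt := Int.emod_lt_of_pos t hk'
  have hdvd_iff (j : ℕ) (hj : j < k) : (k : ℤ) ∣ t - j ↔ (j : ℤ) = t % k := by
    rw [← Int.modEq_iff_dvd, Int.ModEq, Int.emod_eq_of_lt (by positivity) (by exact_mod_cast hj)]
  have hmem : (t % k).toNat ∈ range k := mem_range.mpr (by omega)
  rw [sum_eq_single_of_mem _ hmem, if_pos]
  · rw [hdvd_iff _ (mem_range.mp hmem), Int.toNat_of_nonneg hmod_nonneg]
  · intro j hj hne
    rw [if_neg (by rw [hdvd_iff _ (mem_range.mp hj)]; omega)]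

theorem intCast_mul_neg_fract_div_add_eq {F : Type*} [Field F] [LinearOrder F]
    [IsStrictOrderedRing F] [FloorRing F] {k : ℕ} (hk : k ≠ 0) (t : ℤ) :
    (t : F) * (-Int.fract ((t : F) / k) + ((k : F) - 1) / (2 * k)) =
      t / k * (((k : F) - 1) / 2 - ((t % k : ℤ) : F)) := by
  have hk0 : (k : F) ≠ 0 := Nat.cast_ne_zero.mpr hk
  rw [Int.fract_div_intCast_eq_div_intCast_mod]
  field_simp
  ring

namespace IsPrimitiveRoot

variable {K : Type*} [Field K] {ω : K} {k : ℕ}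

theorem pow_pow_eq_one (hω : IsPrimitiveRoot ω k) (i : ℕ) : (ω ^ i) ^ k = 1 := by
  rw [pow_right_comm, hω.pow_eq_one, one_pow]

theorem pow_ne_one_of_mem_Ico (hω : IsPrimitiveRoot ω k) {i : ℕ} (hi : i ∈ Ico 1 k) :
    ω ^ i ≠ 1 :=
  hω.pow_ne_one_of_pos_of_lt (Nat.one_le_iff_ne_zero.mp (mem_Ico.mp hi).1) (mem_Ico.mp hi).2

theorem sum_range_pow_zpow (hω : IsPrimitiveRoot ω k) (m : ℤ) :
    ∑ i ∈ range k, (ω ^ i) ^ m = if (k : ℤ) ∣ m then (k : K) else 0 := by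
  have hcomm (n : ℕ) : (ω ^ n) ^ m = (ω ^ m) ^ n := by
    rw [← zpow_natCast, ← zpow_mul, mul_comm, zpow_mul, zpow_natCast]
  simp only [hcomm]
  split_ifs with hdvd
  · simp [(hω.zpow_eq_one_iff_dvd m).mpr hdvd]
  · refine geom_sum_eq_zero_of_pow_eq_one ?_ (mt (hω.zpow_eq_one_iff_dvd m).mp hdvd)
    rw [← hcomm, hω.pow_eq_one, one_zpow]

theorem sum_Ico_pow_zpow (hω : IsPrimitiveRoot ω k) (hk : 0 < k) (m : ℤ) :
    ∑ i ∈ Ico 1 k, (ω ^ i) ^ m = (if (k : ℤ) ∣ m then (k : K) else 0) - 1 := by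
  rw [← hω.sum_range_pow_zpow m, range_eq_Ico, sum_eq_sum_Ico_succ_bot hk]
  simp

theorem sum_Ico_zpow_div_one_sub_inv [CharZero K] (hω : IsPrimitiveRoot ω k) (hk : 0 < k)
    (t : ℤ) :
    ∑ i ∈ Ico 1 k, (ω ^ i) ^ t / (1 - (ω ^ i)⁻¹) = ((k : K) - 1) / 2 - ((t % k : ℤ) : K) := by
  have hk0 : (k : K) ≠ 0 := Nat.cast_ne_zero.mpr hk.ne'
  have hterm (i : ℕ) (hi : i ∈ Ico 1 k) : (ω ^ i) ^ t / (1 - (ω ^ i)⁻¹) =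
      -(k : K)⁻¹ * ∑ j ∈ range k, (j : K) * (ω ^ i) ^ (t - j) :=
    zpow_div_one_sub_inv_eq_sum (hω.pow_pow_eq_one i) (hω.pow_ne_one_of_mem_Ico hi) hk0 t
  rw [sum_congr rfl hterm, ← mul_sum, sum_comm]
  simp only [← mul_sum, hω.sum_Ico_pow_zpow hk, mul_sub, mul_ite, mul_zero, mul_one,
    sum_sub_distrib]
  have hmod : (((t % k).toNat : ℕ) : K) = ((t % k : ℤ) : K) := by
    exact_mod_cast Int.toNat_of_nonneg (Int.emod_nonneg t (by omega))
  rw [sum_range_ite_dvd_intCast_sub hk, hmod]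
  field_simp
  linear_combination sum_range_natCast_mul_two (R := K) k

end IsPrimitiveRoot

theorem sum_inv_square_fract_identity_general (k : ℕ) (ω : ℂ)
    (hω : IsPrimitiveRoot ω k) (s : ℤ) :
    ∑ i ∈ Finset.Icc 1 (k-1), ω ^ (s * (i : ℤ)) / (1 - ω ^ (-(i : ℤ)))^2
      = ((∑ l ∈ Finset.range k, ((s : ℚ) - (l : ℚ)) *
          (-Int.fract (((s : ℚ) - (l : ℚ)) / (k : ℚ)) + ((k : ℚ) - 1) / (2 * k)) : ℚ) : ℂ) := by
  obtain rfl | hk := Nat.eq_zero_or_pos k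
  · simp
  have hk0 : (k : ℂ) ≠ 0 := Nat.cast_ne_zero.mpr hk.ne'
  have hrhs : ((∑ l ∈ Finset.range k, ((s : ℚ) - (l : ℚ)) *
      (-Int.fract (((s : ℚ) - (l : ℚ)) / (k : ℚ)) + ((k : ℚ) - 1) / (2 * k)) : ℚ) : ℂ) =
      ∑ l ∈ range k, ((s : ℂ) - l) / k * (((k : ℂ) - 1) / 2 - (((s - l) % k : ℤ) : ℂ)) := by
    rw [Rat.cast_sum]
    refine sum_congr rfl fun l _ => ?_
    have h := intCast_mul_neg_fract_div_add_eq (F := ℚ) hk.ne' (s - l)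
    push_cast at h
    rw [h]
    push_cast
    rfl
  rw [Icc_sub_one_right_eq_Ico_of_not_isMin (by simpa using hk.ne'), hrhs]
  calc ∑ i ∈ Ico 1 k, ω ^ (s * (i : ℤ)) / (1 - ω ^ (-(i : ℤ))) ^ 2
      = ∑ i ∈ Ico 1 k, (ω ^ i) ^ s / (1 - (ω ^ i)⁻¹) ^ 2 := by
        simp only [mul_comm s, zpow_mul, zpow_neg, zpow_natCast]
    _ = ∑ i ∈ Ico 1 k, ∑ l ∈ range k,
          ((s : ℂ) - l) / k * ((ω ^ i) ^ (s - l) / (1 - (ω ^ i)⁻¹)) :=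
        sum_congr rfl fun i hi => zpow_div_one_sub_inv_sq_eq_sum (hω.pow_pow_eq_one i)
          (hω.pow_ne_one_of_mem_Ico hi) hk0 s
    _ = ∑ l ∈ range k, ((s : ℂ) - l) / k * (((k : ℂ) - 1) / 2 - (((s - l) % k : ℤ) : ℂ)) := by
        rw [sum_comm]
        refine sum_congr rfl fun l _ => ?_
        rw [← mul_sum, hω.sum_Ico_zpow_div_one_sub_inv hk]

/-- `∑_{i=1}^{k-1} ω^{si}/(1-ω^{-i})² = ∑_{l=0}^{k-1} (s-l)(-{(s-l)/k} + (k-1)/(2k))`. -/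
theorem sum_inv_square_fract_identity (k : ℕ) (hk : 2 ≤ k) (ω : ℂ)
    (hω : IsPrimitiveRoot ω k) (s : ℤ) :
    ∑ i ∈ Finset.Icc 1 (k-1), ω ^ (s * (i : ℤ)) / (1 - ω ^ (-(i : ℤ)))^2
      = ((∑ l ∈ Finset.range k, ((s : ℚ) - (l : ℚ)) *
          (-Int.fract (((s : ℚ) - (l : ℚ)) / (k : ℚ)) + ((k : ℚ) - 1) / (2 * k)) : ℚ) : ℂ) :=
  sum_inv_square_fract_identity_general k ω hω s
end

section
/- Let $k \geq 2$, let $\omega$ be a primitive complex $k$-th root of unity, let $1 \leq i \leq k-1$, and let $x \in \mathbb{C}$ with $x^k \neq 1$. Then $\prod_{\substack{j=1 \\ j \neq i}}^{k-1} (x - \omega^j) = -\sum_{n=0}^{k-2} x^n \sum_{l=1}^{n+1} \omega^{-l i}$. -/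
/-!
By `X_pow_sub_C_eq_prod`, `∏_{j=1}^{k-1} (X - ω^j) = 1 + X + ⋯ + X^{k-1}`, so the claim is that the
right-hand side is the quotient of this geometric sum by `X - ω^i`. With `r = ω^{-i}` one has
`ω^i ∑_{l=1}^{n+1} r^l = 1 + ∑_{l=1}^{n} r^l`, so multiplying the right-hand side by `X - ω^i`
telescopes to `∑_{n<k-1} X^n - X^{k-1} ∑_{l=1}^{k-1} r^l`, and the last sum is `-1` because
`r ≠ 1` is a `k`-th root of unity. The identity therefore holds in `ℂ[X]`, hence for every `x`.
-/

open Finset Polynomial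

section Telescoping

variable {R : Type*} [CommRing R] {ζ r : R}

theorem mul_sum_Icc_pow_succ (h : ζ * r = 1) (m : ℕ) :
    ζ * ∑ l ∈ Icc 1 (m + 1), r ^ l = 1 + ∑ l ∈ Icc 1 m, r ^ l := by
  induction m with
  | zero => simp [h]
  | succ m ih =>
    rw [sum_Icc_succ_top (by omega), mul_add, ih, sum_Icc_succ_top (by omega), pow_succ',
      ← mul_assoc, h, one_mul, add_assoc]

theorem sub_mul_sum_pow_mul_sum_Icc_pow (h : ζ * r = 1) (x : R) (m : ℕ) :
    (x - ζ) * ∑ n ∈ range m, x ^ n * ∑ l ∈ Icc 1 (n + 1), r ^ l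
      = x ^ m * ∑ l ∈ Icc 1 m, r ^ l - ∑ n ∈ range m, x ^ n := by
  induction m with
  | zero => simp
  | succ m ih =>
    rw [sum_range_succ, mul_add, ih, sum_range_succ]
    linear_combination -x ^ m * mul_sum_Icc_pow_succ h m

end Telescoping

theorem sum_Icc_pow_eq_neg_one {R : Type*} [CommRing R] [IsDomain R] {r : R} {k : ℕ}
    (hk : 0 < k) (hrk : r ^ k = 1) (hr : r ≠ 1) : ∑ l ∈ Icc 1 (k - 1), r ^ l = -1 := by
  have hgeom : ∑ l ∈ range k, r ^ l = 0 := by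
    have := geom_sum_mul r k
    rw [hrk, sub_self] at this
    exact (mul_eq_zero.1 this).resolve_right (sub_ne_zero.2 hr)
  rw [sum_range_eq_add_Ico _ hk, pow_zero,
    ← Icc_sub_one_right_eq_Ico_of_not_isMin (by simpa using hk.ne')] at hgeom
  linear_combination hgeom

namespace IsPrimitiveRoot

variable {R : Type*} [CommRing R] [IsDomain R] {ω : R} {k : ℕ}

theorem prod_Icc_X_sub_C_pow (hω : IsPrimitiveRoot ω k) (hk : 0 < k) :
    ∏ j ∈ Icc 1 (k - 1), (X - C (ω ^ j)) = ∑ n ∈ range k, (X : R[X]) ^ n := by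
  have h := X_pow_sub_C_eq_prod hω hk (one_pow k)
  rw [C_1, ← mul_geom_sum, prod_range_eq_mul_Ico _ hk, pow_zero, one_mul] at h
  simp only [mul_one] at h
  rw [Icc_sub_one_right_eq_Ico_of_not_isMin (by simpa using hk.ne')]
  exact (mul_left_cancel₀ (X_sub_C_ne_zero 1) h).symm

theorem prod_erase_X_sub_C_pow (hω : IsPrimitiveRoot ω k) {i : ℕ} (hi : i ∈ Icc 1 (k - 1))
    {r : R} (hr : ω ^ i * r = 1) :
    ∏ j ∈ (Icc 1 (k - 1)).erase i, (X - C (ω ^ j))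
      = -∑ n ∈ range (k - 1), X ^ n * ∑ l ∈ Icc 1 (n + 1), C r ^ l := by
  obtain ⟨hi1, hi2⟩ := mem_Icc.1 hi
  have hrk : r ^ k = 1 :=
    calc r ^ k = (ω ^ i * r) ^ k := by
          rw [mul_pow, ← pow_mul, mul_comm i, pow_mul, hω.pow_eq_one, one_pow, one_mul]
      _ = 1 := by rw [hr, one_pow]
  have hωi : ω ^ i ≠ 1 := hω.pow_ne_one_of_pos_of_lt (by omega) (by omega)
  have hr1 : r ≠ 1 := by
    rintro rfl
    exact hωi (by simpa using hr)
  have hCr : C (ω ^ i) * C r = 1 := by rw [← C_mul, hr, C_1]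
  have hsum : ∑ l ∈ Icc 1 (k - 1), C r ^ l = -1 := by
    simp only [← C_pow, ← map_sum, sum_Icc_pow_eq_neg_one (by omega) hrk hr1, C_neg, C_1]
  apply mul_left_cancel₀ (X_sub_C_ne_zero (ω ^ i))
  rw [mul_prod_erase _ (fun j => X - C (ω ^ j)) hi, hω.prod_Icc_X_sub_C_pow (by omega), mul_neg,
    sub_mul_sum_pow_mul_sum_Icc_pow hCr, hsum]
  conv_lhs => rw [← Nat.sub_add_cancel (show 1 ≤ k by omega), sum_range_succ]
  ring

end IsPrimitiveRoot

theorem prod_erase_roots_general (k : ℕ) (ω : ℂ) (hω : IsPrimitiveRoot ω k)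
    (i : ℕ) (hi1 : 1 ≤ i) (hi2 : i ≤ k - 1) (x : ℂ) :
    ∏ j ∈ (Finset.Icc 1 (k-1)).erase i, (x - ω ^ j)
      = -∑ n ∈ Finset.range (k-1), x ^ n * ∑ l ∈ Finset.Icc 1 (n+1), ω ^ (-((l : ℤ) * i)) := by
  have hinv : ω ^ i * (ω ^ i)⁻¹ = 1 := mul_inv_cancel₀ (pow_ne_zero _ (hω.ne_zero (by omega)))
  have hzpow (l : ℕ) : ω ^ (-((l : ℤ) * i)) = ((ω ^ i)⁻¹) ^ l := by
    rw [inv_pow, ← pow_mul, ← zpow_natCast, ← zpow_neg, Nat.cast_mul, mul_comm]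
  have h := congrArg (eval x) (hω.prod_erase_X_sub_C_pow (mem_Icc.2 ⟨hi1, hi2⟩) hinv)
  simpa only [eval_prod, eval_neg, eval_finsetSum, eval_mul, eval_pow, eval_sub, eval_X, eval_C,
    hzpow] using h

/-- For a primitive `k`-th root of unity `ω`, `1 ≤ i ≤ k-1` and `x^k ≠ 1`,
`∏_{j≠i} (x - ω^j) = -∑_{n=0}^{k-2} x^n ∑_{l=1}^{n+1} ω^{-li}`. -/
theorem prod_erase_roots (k : ℕ) (hk : 2 ≤ k) (ω : ℂ) (hω : IsPrimitiveRoot ω k)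
    (i : ℕ) (hi1 : 1 ≤ i) (hi2 : i ≤ k - 1) (x : ℂ) (hx : x ^ k ≠ 1) :
    ∏ j ∈ (Finset.Icc 1 (k-1)).erase i, (x - ω ^ j)
      = -∑ n ∈ Finset.range (k-1), x ^ n * ∑ l ∈ Finset.Icc 1 (n+1), ω ^ (-((l : ℤ) * i)) :=
  prod_erase_roots_general k ω hω i hi1 hi2 x
end

section
/- Let $k \geq 2$ be even, write $\tilde{k} = k/2$, let $\omega$ be a primitive $k$-th root of unity, let $\eta \in \mathbb{C}$ satisfy $\eta^{\tilde{k}} = \omega$, and let $1 \leq i \leq \tilde{k} - 1$. Then $\frac{1}{k} \sum_{j=0}^{k-1} \frac{(-1)^j}{\eta^i \omega^j - 1} = \frac{\omega^i}{\omega^{2i} - 1}$. -/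
/-!
Expanding `1 / (y - 1) = (∑_{n<k} yⁿ) / (yᵏ - 1)` with `y = ηⁱωʲ`, whose `k`-th power is always
`ω²ⁱ`, and writing the sign as `(-1)ʲ = (ω^{k/2})ʲ`, the sum over `j` becomes a discrete Fourier
coefficient: by orthogonality of the characters `j ↦ ωⁿʲ` only the term `n = k/2` survives, and
`(ηⁱ)^{k/2} = ωⁱ`.
-/

open Finset

variable {K : Type*} [Field K]

theorem div_sub_one_eq_mul_geom_sum_div {y : K} {k : ℕ} (hy : y ^ k ≠ 1) (a : K) :
    a / (y - 1) = a * (∑ n ∈ range k, y ^ n) / (y ^ k - 1) := by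
  have hy1 : y - 1 ≠ 0 := sub_ne_zero.mpr fun h => hy (by rw [h, one_pow])
  rw [div_eq_div_iff hy1 (sub_ne_zero.mpr hy), mul_assoc, geom_sum_mul]

namespace IsPrimitiveRoot

variable {ζ : K} {k : ℕ}

theorem geom_sum_pow_eq_ite (hζ : IsPrimitiveRoot ζ k) (a : ℕ) :
    ∑ j ∈ range k, (ζ ^ a) ^ j = if k ∣ a then (k : K) else 0 := by
  split_ifs with hdvd
  · simp [(hζ.pow_eq_one_iff_dvd a).mpr hdvd]
  · have hne : ζ ^ a ≠ 1 := mt (hζ.pow_eq_one_iff_dvd a).mp hdvd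
    rw [geom_sum_eq hne, ← pow_mul, mul_comm, pow_mul, hζ.pow_eq_one, one_pow, sub_self,
      zero_div]

/-- The `r`-th discrete Fourier coefficient of `j ↦ 1 / (x ζʲ - 1)`, written with
`ζ ^ (k - r) = ζ⁻¹ ^ r`. -/
theorem sum_pow_mul_div_mul_pow_sub_one (hζ : IsPrimitiveRoot ζ k) {x : K} (hx : x ^ k ≠ 1)
    {r : ℕ} (hr : r < k) :
    ∑ j ∈ range k, ζ ^ ((k - r) * j) / (x * ζ ^ j - 1) = k * x ^ r / (x ^ k - 1) := by
  have hpow (j : ℕ) : (x * ζ ^ j) ^ k = x ^ k := by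
    rw [mul_pow, ← pow_mul, mul_comm j, pow_mul, hζ.pow_eq_one, one_pow, mul_one]
  have hdvd (n : ℕ) (hn : n < k) : k ∣ k - r + n ↔ n = r :=
    ⟨fun h => by have := Nat.eq_of_dvd_of_lt_two_mul (by omega) h (by omega); omega,
      fun h => ⟨1, by omega⟩⟩
  calc ∑ j ∈ range k, ζ ^ ((k - r) * j) / (x * ζ ^ j - 1)
      = (∑ n ∈ range k, x ^ n * ∑ j ∈ range k, (ζ ^ (k - r + n)) ^ j) / (x ^ k - 1) := by
        simp_rw [div_sub_one_eq_mul_geom_sum_div (hpow _ ▸ hx), hpow, ← sum_div, mul_sum]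
        rw [sum_comm]
        refine congrArg (· / _) (sum_congr rfl fun j _ => sum_congr rfl fun n _ => ?_)
        ring
    _ = (∑ n ∈ range k, if n = r then x ^ n * k else 0) / (x ^ k - 1) := by
        refine congrArg (· / _) (sum_congr rfl fun n hn => ?_)
        simp only [hζ.geom_sum_pow_eq_ite, hdvd n (mem_range.mp hn), mul_ite, mul_zero]
    _ = k * x ^ r / (x ^ k - 1) := by
        rw [sum_ite_eq', if_pos (mem_range.mpr hr), mul_comm]

end IsPrimitiveRoot

theorem sum_eta_identity_even_signed_general (k : ℕ) (heven : Even k)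
    (ω η : ℂ) (hω : IsPrimitiveRoot ω k) (hη : η ^ (k/2) = ω)
    (i : ℕ) (hi1 : 1 ≤ i) (hi2 : i ≤ k/2 - 1) :
    (1 / (k : ℂ)) * ∑ j ∈ Finset.range k, (-1 : ℂ) ^ j / (η ^ i * ω ^ j - 1)
      = ω ^ i / (ω ^ (2*i) - 1) := by
  obtain ⟨m, rfl⟩ := heven
  rw [show (m + m) / 2 = m by omega] at hη hi2
  have hhalf : ω ^ m = -1 := by
    have h := hω.pow_of_dvd (p := m) (by omega) (Dvd.intro_left 2 (two_mul m))
    rw [← two_mul, Nat.mul_div_cancel 2 (by omega)] at h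
    exact h.eq_neg_one_of_two_right
  have hsign (j : ℕ) : (-1 : ℂ) ^ j = ω ^ ((m + m - m) * j) := by
    rw [Nat.add_sub_cancel, pow_mul, hhalf]
  have hxk : (η ^ i) ^ (m + m) = ω ^ (2 * i) := by
    rw [← pow_mul, show i * (m + m) = m * (2 * i) by ring, pow_mul, hη]
  have hxm : (η ^ i) ^ m = ω ^ i := by rw [← pow_mul, mul_comm, pow_mul, hη]
  have hω2i : ω ^ (2 * i) ≠ 1 := hω.pow_ne_one_of_pos_of_lt (by omega) (by omega)
  have hk0 : ((m + m : ℕ) : ℂ) ≠ 0 := Nat.cast_ne_zero.mpr (by omega)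
  simp_rw [hsign]
  rw [hω.sum_pow_mul_div_mul_pow_sub_one (hxk ▸ hω2i) (by omega), hxk, hxm]
  field_simp

/-- For even `k`, `k̃ = k/2`, `η^{k̃} = ω` with `ω` a primitive `k`-th root of unity, and
`1 ≤ i ≤ k̃-1`: `(1/k) ∑_{j=0}^{k-1} (-1)^j/(η^i ω^j - 1) = ω^i/(ω^{2i}-1)`. -/
theorem sum_eta_identity_even_signed (k : ℕ) (hk : 2 ≤ k) (heven : Even k)
    (ω η : ℂ) (hω : IsPrimitiveRoot ω k) (hη : η ^ (k/2) = ω)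
    (i : ℕ) (hi1 : 1 ≤ i) (hi2 : i ≤ k/2 - 1) :
    (1 / (k : ℂ)) * ∑ j ∈ Finset.range k, (-1 : ℂ) ^ j / (η ^ i * ω ^ j - 1)
      = ω ^ i / (ω ^ (2*i) - 1) :=
  sum_eta_identity_even_signed_general k heven ω η hω hη i hi1 hi2
end

section
/- Let $k \geq 2$ be even, write $\tilde{k} = k/2$, let $\omega$ be a primitive $k$-th root of unity, let $\eta$ satisfy $\eta^{\tilde{k}} = \omega$, and let $1 \leq i \leq \tilde{k}-1$. Then $\frac{1}{k} \sum_{j=0}^{k-1} \frac{1}{\eta^i \omega^j - 1} = \frac{1}{\omega^{2i} - 1}$. -/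
/-!
Expand each term as a geometric series: since `(z ω^j)^k = z^k`,
`1 / (z ω^j - 1) = (∑_{n<k} (z ω^j)^n) / (z^k - 1)`. Summing over `j` and exchanging the sums,
the inner sums `∑_j ω^{nj}` vanish except for `n = 0`, so
`∑_j 1 / (z ω^j - 1) = k / (z^k - 1)`. With `z = η^i` we have `z^k = ω^{2i} ≠ 1`.
-/

open Finset

namespace IsPrimitiveRoot

variable {R : Type*} [CommRing R] [IsDomain R] {ω : R} {k : ℕ}

theorem sum_range_pow_pow_eq_zero (hω : IsPrimitiveRoot ω k) {n : ℕ} (hn0 : n ≠ 0)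
    (hnk : n < k) : ∑ j ∈ range k, (ω ^ n) ^ j = 0 := by
  have hgeom := geom_sum_mul (ω ^ n) k
  rw [pow_right_comm, hω.pow_eq_one, one_pow, sub_self] at hgeom
  exact (mul_eq_zero.mp hgeom).resolve_right (sub_ne_zero.mpr (hω.pow_ne_one_of_pos_of_lt hn0 hnk))

theorem sum_range_sum_range_mul_pow_pow (hω : IsPrimitiveRoot ω k) (z : R) :
    ∑ j ∈ range k, ∑ n ∈ range k, (z * ω ^ j) ^ n = k := by
  have hfactor (n : ℕ) : ∑ j ∈ range k, (z * ω ^ j) ^ n = z ^ n * ∑ j ∈ range k, (ω ^ n) ^ j := by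
    simp only [mul_sum, mul_pow, pow_right_comm ω]
  rw [sum_comm, sum_congr rfl fun n _ => hfactor n]
  rcases Nat.eq_zero_or_pos k with rfl | hk
  · simp
  rw [sum_eq_single_of_mem 0 (mem_range.mpr hk)]
  · simp
  · intro n hn hn0
    rw [hω.sum_range_pow_pow_eq_zero hn0 (mem_range.mp hn), mul_zero]

end IsPrimitiveRoot

theorem IsPrimitiveRoot.sum_range_one_div_mul_pow_sub_one {K : Type*} [Field K] {ω : K} {k : ℕ}
    (hω : IsPrimitiveRoot ω k) {z : K} (hz : z ^ k ≠ 1) :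
    ∑ j ∈ range k, 1 / (z * ω ^ j - 1) = k / (z ^ k - 1) := by
  have hzk : z ^ k - 1 ≠ 0 := sub_ne_zero.mpr hz
  have hterm (j : ℕ) :
      1 / (z * ω ^ j - 1) = (∑ n ∈ range k, (z * ω ^ j) ^ n) / (z ^ k - 1) := by
    have hpow : (z * ω ^ j) ^ k = z ^ k := by
      rw [mul_pow, pow_right_comm ω, hω.pow_eq_one, one_pow, mul_one]
    have hden : z * ω ^ j - 1 ≠ 0 := fun h => hz <| by
      rw [← hpow, sub_eq_zero.mp h, one_pow]
    rw [div_eq_div_iff hden hzk, geom_sum_mul, one_mul, hpow]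
  rw [sum_congr rfl fun j _ => hterm j, ← sum_div, hω.sum_range_sum_range_mul_pow_pow]

theorem sum_eta_identity_even_general (k : ℕ) (heven : Even k)
    (ω η : ℂ) (hω : IsPrimitiveRoot ω k) (hη : η ^ (k/2) = ω)
    (i : ℕ) (hi1 : 1 ≤ i) (hi2 : i ≤ k/2 - 1) :
    (1 / (k : ℂ)) * ∑ j ∈ Finset.range k, 1 / (η ^ i * ω ^ j - 1)
      = 1 / (ω ^ (2*i) - 1) := by
  obtain ⟨m, rfl⟩ := heven
  have hm : (m + m) / 2 = m := by omega
  rw [hm] at hη hi2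
  have hpow : (η ^ i) ^ (m + m) = ω ^ (2 * i) := by
    rw [← hη, ← pow_mul, ← pow_mul]
    ring_nf
  have hne : ω ^ (2 * i) ≠ 1 := hω.pow_ne_one_of_pos_of_lt (by omega) (by omega)
  have hk : ((m + m : ℕ) : ℂ) ≠ 0 := Nat.cast_ne_zero.mpr (by omega)
  rw [hω.sum_range_one_div_mul_pow_sub_one (hpow ▸ hne), hpow]
  field_simp

/-- For even `k`, `k̃ = k/2`, `η^{k̃} = ω` with `ω` a primitive `k`-th root of unity, and
`1 ≤ i ≤ k̃-1`: `(1/k) ∑_{j=0}^{k-1} 1/(η^i ω^j - 1) = 1/(ω^{2i}-1)`. -/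
theorem sum_eta_identity_even (k : ℕ) (hk : 2 ≤ k) (heven : Even k)
    (ω η : ℂ) (hω : IsPrimitiveRoot ω k) (hη : η ^ (k/2) = ω)
    (i : ℕ) (hi1 : 1 ≤ i) (hi2 : i ≤ k/2 - 1) :
    (1 / (k : ℂ)) * ∑ j ∈ Finset.range k, 1 / (η ^ i * ω ^ j - 1)
      = 1 / (ω ^ (2*i) - 1) :=
  sum_eta_identity_even_general k heven ω η hω hη i hi1 hi2
end

section
/- Let $r \geq 1$, $k \geq 2$, let $C$ be the Cartan matrix of type $A_{k-1}$, and for each $\alpha = 1, \dots, r$ let $v_\alpha \in \frac{1}{k}\mathbb{Z}^{k-1}$ be a vector such that $k (v_\alpha)_l \equiv -l c_\alpha \pmod{k}$ for all $l = 1, \dots, k-1$, for some $c_\alpha \in \{0, 1, \dots, k-1\}$. Let $n_1, \dots, n_r$ be nonnegative integers. Then the quantity $\Delta = \sum_{\alpha=1}^r n_\alpha + \frac{1}{2} \sum_{\alpha=1}^r v_\alpha \cdot C v_\alpha - \frac{1}{2r} \sum_{\alpha, \beta = 1}^r v_\alpha \cdot C v_\beta$ lies in $\frac{1}{2 r k}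 \mathbb{Z}$. -/
/-! With `w_α = k v_α ∈ ℤ^{k-1}`, the congruences say `w_α ≡ -c_α ρ (mod k)` for
`ρ = (1, 2, …, k-1)`. Since `C ρ = (0, …, 0, k) ≡ 0 (mod k)`, every `w_α · C w_β` is divisible
by `k`, i.e. `v_α · C v_β ∈ (1/k)ℤ`, and clearing the denominators `2` and `r` gives the claim. -/

open Matrix Finset

namespace CartanMatrix

theorem sum_range_A_entry_mul_succ (i N : ℕ) :
    ∑ b ∈ range N, (if i = b then (2 : ℤ) else if i + 1 = b ∨ b + 1 = i then -1 else 0) * (b + 1) =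
      if N < i then 0 else if N = i then -(i : ℤ) else if N = i + 1 then (i : ℤ) + 2 else 0 := by
  induction N with
  | zero => simp only [range_zero, sum_empty]; split_ifs <;> omega
  | succ N ih =>
    rw [sum_range_succ, ih]
    split_ifs <;> omega

theorem A_mulVec_succ (n : ℕ) (i : Fin n) :
    (A n *ᵥ fun j => (j : ℤ) + 1) i = if (i : ℕ) + 1 = n then (n : ℤ) + 1 else 0 := by
  simp only [mulVec, dotProduct, A, of_apply, Fin.ext_iff]
  rw [Fin.sum_univ_eq_sum_range (fun b => (if (i : ℕ) = b then (2 : ℤ)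
    else if (i : ℕ) + 1 = b ∨ b + 1 = i then -1 else 0) * (b + 1)), sum_range_A_entry_mul_succ]
  have := i.isLt
  split_ifs <;> omega

theorem map_intCast_A_mulVec_succ_eq_zero {k n : ℕ} (hnk : n + 1 = k) :
    (A n).map (Int.cast : ℤ → ZMod k) *ᵥ (fun j => ((j : ℕ) : ZMod k) + 1) = 0 := by
  subst hnk
  ext i
  have h := congrArg (Int.castRingHom (ZMod (n + 1))) (A_mulVec_succ n i)
  rw [RingHom.map_mulVec] at h
  simpa [Function.comp_def, apply_ite] using h

theorem dvd_dotProduct_A_mulVec {k n : ℕ} (hnk : n + 1 = k) {w w' : Fin n → ℤ} {c c' : ℤ}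
    (hw : ∀ l : Fin n, (k : ℤ) ∣ w l + ((l : ℤ) + 1) * c)
    (hw' : ∀ l : Fin n, (k : ℤ) ∣ w' l + ((l : ℤ) + 1) * c') :
    (k : ℤ) ∣ w ⬝ᵥ (A n *ᵥ w') := by
  have hcast : ∀ {u : Fin n → ℤ} {d : ℤ}, (∀ l : Fin n, (k : ℤ) ∣ u l + ((l : ℤ) + 1) * d) →
      (Int.cast ∘ u : Fin n → ZMod k) = -(d : ZMod k) • fun j : Fin n => ((j : ℕ) : ZMod k) + 1 := by
    intro u d hu
    funext l
    have := (ZMod.intCast_zmod_eq_zero_iff_dvd _ k).2 (hu l)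
    push_cast at this
    simp only [Function.comp_apply, Pi.smul_apply, smul_eq_mul]
    linear_combination this
  rw [← ZMod.intCast_zmod_eq_zero_iff_dvd]
  have hmap : ((w ⬝ᵥ (A n *ᵥ w') : ℤ) : ZMod k) =
      (Int.cast ∘ w) ⬝ᵥ ((A n).map Int.cast *ᵥ (Int.cast ∘ w')) := by
    rw [← eq_intCast (Int.castRingHom (ZMod k)), RingHom.map_dotProduct]
    congr 1
    funext i
    exact RingHom.map_mulVec _ _ _ i
  rw [hmap, hcast hw, hcast hw', mulVec_smul, smul_dotProduct, dotProduct_smul,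
    map_intCast_A_mulVec_succ_eq_zero hnk, dotProduct_zero, smul_zero, smul_zero]

theorem dotProduct_map_intCast_mulVec_div {ι K : Type*} [Fintype ι] [Field K]
    (M : Matrix ι ι ℤ) (w w' : ι → ℤ) (k : K) :
    (fun i => (w i : K) / k) ⬝ᵥ (M.map Int.cast *ᵥ fun j => (w' j : K) / k) =
      ((w ⬝ᵥ (M *ᵥ w') : ℤ) : K) / k ^ 2 := by
  simp only [dotProduct, mulVec, map_apply]
  push_cast
  rw [sum_div]
  refine sum_congr rfl fun i _ => ?_
  rw [mul_sum, mul_sum, sum_div]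
  refine sum_congr rfl fun j _ => ?_
  ring

end CartanMatrix

theorem discriminant_in_lattice_general (r k : ℕ) (hr : 1 ≤ r) (hk : 2 ≤ k)
    (C : Matrix (Fin (k-1)) (Fin (k-1)) ℚ)
    (hC : ∀ i j, C i j =
      if i = j then 2 else if i.val = j.val + 1 ∨ j.val = i.val + 1 then -1 else 0)
    (v : Fin r → Fin (k-1) → ℚ) (c : Fin r → ℕ)
    (hv : ∀ α l, ∃ m : ℤ, (k : ℚ) * v α l = (m : ℚ) ∧
        (k : ℤ) ∣ m + ((l.val : ℤ) + 1) * c α)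
    (n : Fin r → ℕ) :
    ∃ m : ℤ,
      (∑ α, (n α : ℚ))
        + (1/2) * ∑ α, dotProduct (v α) (C.mulVec (v α))
        - (1/(2*(r : ℚ))) * ∑ α, ∑ β, dotProduct (v α) (C.mulVec (v β))
      = (m : ℚ) / (2 * r * k) := by
  choose w hkv hw using hv
  have hk0 : (k : ℚ) ≠ 0 := by positivity
  have hr0 : (r : ℚ) ≠ 0 := by positivity
  have hvw : ∀ α, v α = fun l => (w α l : ℚ) / k := by
    intro α
    funext l
    rw [← hkv, mul_div_cancel_left₀ _ hk0]
  have hCA : C = (CartanMatrix.A (k - 1)).map Int.cast := by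
    ext i j
    rw [hC, map_apply, CartanMatrix.A, of_apply]
    split_ifs <;> simp_all <;> omega
  have hform : ∀ α β, ∃ t : ℤ, v α ⬝ᵥ (C *ᵥ v β) = t / k := by
    intro α β
    obtain ⟨t, ht⟩ := CartanMatrix.dvd_dotProduct_A_mulVec (by omega) (hw α) (hw β)
    refine ⟨t, ?_⟩
    rw [hvw, hvw, hCA, CartanMatrix.dotProduct_map_intCast_mulVec_div, ht]
    push_cast
    field_simp
  choose t ht using hform
  refine ⟨2 * r * k * ∑ α, n α + r * ∑ α, t α α - ∑ α, ∑ β, t α β, ?_⟩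
  simp only [ht, ← sum_div]
  push_cast
  field_simp

/-- The discriminant `Δ = ∑ n_α + ½ ∑ v_α·Cv_α - (1/2r) ∑_{α,β} v_α·Cv_β`
lies in `(1/2rk)ℤ`. -/
theorem discriminant_in_lattice (r k : ℕ) (hr : 1 ≤ r) (hk : 2 ≤ k)
    (C : Matrix (Fin (k-1)) (Fin (k-1)) ℚ)
    (hC : ∀ i j, C i j =
      if i = j then 2 else if i.val = j.val + 1 ∨ j.val = i.val + 1 then -1 else 0)
    (v : Fin r → Fin (k-1) → ℚ) (c : Fin r → ℕ) (hck : ∀ α, c α < k)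
    (hv : ∀ α l, ∃ m : ℤ, (k : ℚ) * v α l = (m : ℚ) ∧
        (k : ℤ) ∣ m + ((l.val : ℤ) + 1) * c α)
    (n : Fin r → ℕ) :
    ∃ m : ℤ,
      (∑ α, (n α : ℚ))
        + (1/2) * ∑ α, dotProduct (v α) (C.mulVec (v α))
        - (1/(2*(r : ℚ))) * ∑ α, ∑ β, dotProduct (v α) (C.mulVec (v β))
      = (m : ℚ) / (2 * r * k) :=
  discriminant_in_lattice_general r k hr hk C hC v c hv n
end
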